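/- arXiv:1807.01661 — 7 statements merged into one kernel-verified Lean document; each statement's English description precedes it below -/
import Mathlib

section
/- If Q is a probability mass function on W = {0,1}^4 (with elements w = (y0,y1,d0,d1)) satisfying the data-matching constraints sum_{w in W_x} Q(w) = P_{y,d|z} for each x = (y,d,z) in {0,1}^3, where W_x = {(y0,y1,d0,d1) : d = d1*z + d0*(1-z) and y = y1*d + y0*(1-d)}, then for any i,j in {0,1}, the probability that (Y0,Y1) = (i,j), i.e. sum over w with (y0,y1)=(i,j) of Q(w), is at most min{P_{i,0|0} + P_{j,1|0}, P_{i,0|1} + P_{j,1|1}}. -/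
open Finset

abbrev W : Type := Fin 2 × Fin 2 × Fin 2 × Fin 2

/-- treatment received given instrument value z: d1 if z=1, d0 if z=0,
i.e. d = d1*z + d0*(1-z) for z ∈ {0,1}. -/
def dsel (z : Fin 2) (w : W) : Fin 2 := if z = 1 then w.2.2.2 else w.2.2.1

/-- outcome given treatment d: y1 if d=1, y0 if d=0, i.e. y = y1*d + y0*(1-d). -/
def ysel (d : Fin 2) (w : W) : Fin 2 := if d = 1 then w.2.1 else w.1

/-- data-matching constraints: ∑_{w ∈ W_x} Q(w) = P_{y,d|z} for each x=(y,d,z). -/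
def DataMatch (Q : W → ℝ) (P : Fin 2 → Fin 2 → Fin 2 → ℝ) : Prop :=
  ∀ y d z : Fin 2,
    ∑ w : W, (if dsel z w = d ∧ ysel d w = y then Q w else 0) = P y d z

/-- Q is a probability mass function on W. -/
def IsPMF (Q : W → ℝ) : Prop := (∀ w : W, 0 ≤ Q w) ∧ ∑ w : W, Q w = 1

/-- P is a valid conditional distribution of (Y,D) given Z. -/
def PValid (P : Fin 2 → Fin 2 → Fin 2 → ℝ) : Prop :=
  (∀ y d z : Fin 2, 0 ≤ P y d z) ∧ ∀ z : Fin 2, ∑ y : Fin 2, ∑ d : Fin 2, P y d z = 1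

/-- instrument monotonicity: no defiers, Q(y0,y1,1,0) = 0. -/
def Mono (Q : W → ℝ) : Prop := ∀ y0 y1 : Fin 2, Q (y0, y1, 1, 0) = 0

theorem stmt_0 (P : Fin 2 → Fin 2 → Fin 2 → ℝ) (Q : W → ℝ)
    (hP : PValid P) (hQ : IsPMF Q) (hD : DataMatch Q P) (i j : Fin 2) :
    ∑ w : W, (if w.1 = i ∧ w.2.1 = j then Q w else 0) ≤
      min (P i 0 0 + P j 1 0) (P i 0 1 + P j 1 1) := by
  have key : ∀ z : Fin 2,
      ∑ w : W, (if w.1 = i ∧ w.2.1 = j then Q w else 0) ≤ P i 0 z + P j 1 z := by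
    intro z
    rw [← hD i 0 z, ← hD j 1 z, ← Finset.sum_add_distrib]
    apply Finset.sum_le_sum
    intro w _
    have hq := hQ.1 w
    by_cases h : w.1 = i ∧ w.2.1 = j
    · simp only [if_pos h]
      rcases (by omega : dsel z w = 0 ∨ dsel z w = 1) with hd | hd
      · have hA : dsel z w = 0 ∧ ysel 0 w = i := ⟨hd, by simp [ysel, h.1]⟩
        split_ifs with h1 h2 <;> first | linarith | exact absurd hA h1
      · have hA : dsel z w = 1 ∧ ysel 1 w = j := ⟨hd, by simp [ysel, h.2]⟩
        split_ifs with h1 h2 <;> first | linarith | exact absurd hA h2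
    · rw [if_neg h]
      positivity
  exact le_min (key 0) (key 1)
end

section
/- If Q is a probability mass function on W = {0,1}^4 satisfying the data-matching constraints sum_{w in W_x} Q(w) = P_{y,d|z}, and additionally satisfies the instrument-monotonicity constraint sum over w with (d0,d1)=(1,0) of Q(w) = 0, then for any i,j in {0,1}, the probability that (Y0,Y1) lies in {(i,j),(i,1-j),(1-i,j)} is at most min{1, P_{i,0|0} + P_{1-i,0|1} + P_{1-j,1|0} + P_{j,1|1}}. -/
/-!
The region `{(i,j), (i,1-j), (1-i,j)}` is the complement of `(Y0, Y1) = (1-i, 1-j)`, so its mass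
is at most `1`. For the second bound, every type `w` outside `(1-i, 1-j)` that is not a defier lies
in one of the cells `(y, d, z) = (i,0,0), (1-i,0,1), (1-j,1,0), (j,1,1)`: a never-taker in the
first or second according to `y0`, an always-taker in the third or fourth according to `y1`, and a
complier in the first if `y0 = i` and in the fourth if `y1 = j`. Defiers carry no mass, so the
region's mass is bounded by the total mass of the four cells, which the data pin down.
-/

open Finset

section OrderedSums

variable {α ι M : Type*} [Fintype α] [Fintype ι] [AddCommMonoid M] [PartialOrder M]
  [IsOrderedAddMonoid M] {f : α → M} {p : α → Prop} [DecidablePred p]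
  {q : ι → α → Prop} [∀ k, DecidablePred (q k)]

theorem sum_ite_le_sum_sum_ite_of_cover (hf : ∀ a, 0 ≤ f a)
    (hcover : ∀ a, p a → f a ≠ 0 → ∃ k, q k a) :
    ∑ a, (if p a then f a else 0) ≤ ∑ k, ∑ a, (if q k a then f a else 0) := by
  rw [sum_comm]
  refine sum_le_sum fun a _ => ?_
  have hterm : ∀ k, 0 ≤ if q k a then f a else 0 := fun k => ite_nonneg (hf a) le_rfl
  by_cases h : p a ∧ f a ≠ 0
  · obtain ⟨k, hk⟩ := hcover a h.1 h.2
    calc (if p a then f a else 0) = if q k a then f a else 0 := by simp [h.1, hk]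
      _ ≤ _ := single_le_sum (fun k _ => hterm k) (mem_univ k)
  · have h0 : (if p a then f a else 0) = 0 := by
      by_cases hp : p a <;> simp_all
    rw [h0]
    exact sum_nonneg fun k _ => hterm k

end OrderedSums

/-- `InCell (y, d, z) w` is the paper's `w ∈ W_x` for `x = (y, d, z)`. -/
abbrev InCell (x : Fin 2 × Fin 2 × Fin 2) (w : W) : Prop :=
  dsel x.2.2 w = x.2.1 ∧ ysel x.2.1 w = x.1

def boundCells (i j : Fin 2) : Fin 4 → Fin 2 × Fin 2 × Fin 2 :=
  ![(i, 0, 0), (1 - i, 0, 1), (1 - j, 1, 0), (j, 1, 1)]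

theorem exists_inCell_boundCells (i j : Fin 2) (w : W) (hw : w.2.2 ≠ (1, 0))
    (hy : (w.1, w.2.1) ∈ ({(i, j), (i, 1 - j), (1 - i, j)} : Finset (Fin 2 × Fin 2))) :
    ∃ k, InCell (boundCells i j k) w := by
  revert i j w
  decide

theorem stmt_3_general (P : Fin 2 → Fin 2 → Fin 2 → ℝ) (Q : W → ℝ)
    (hQ : IsPMF Q) (hD : DataMatch Q P) (hM : Mono Q) (i j : Fin 2) :
    ∑ w : W, (if (w.1, w.2.1) ∈ ({(i, j), (i, 1 - j), (1 - i, j)} : Finset (Fin 2 × Fin 2))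
        then Q w else 0) ≤
      min 1 (P i 0 0 + P (1 - i) 0 1 + P (1 - j) 1 0 + P j 1 1) := by
  obtain ⟨hQ0, hQ1⟩ := hQ
  refine le_min (hQ1 ▸ sum_le_sum fun w _ => by split_ifs <;> simp [hQ0 w]) ?_
  refine (sum_ite_le_sum_sum_ite_of_cover (q := fun k => InCell (boundCells i j k)) hQ0 ?_).trans_eq
    ?_
  · rintro ⟨y0, y1, d⟩ hy hQw
    refine exists_inCell_boundCells i j _ (fun hdef => hQw ?_) hy
    subst hdef
    exact hM y0 y1
  · rw [Fin.sum_univ_four, ← hD, ← hD, ← hD, ← hD]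
    rfl -- the two sides differ only in their `Decidable` instances

theorem stmt_3 (P : Fin 2 → Fin 2 → Fin 2 → ℝ) (Q : W → ℝ)
    (hP : PValid P) (hQ : IsPMF Q) (hD : DataMatch Q P) (hM : Mono Q) (i j : Fin 2) :
    ∑ w : W, (if (w.1, w.2.1) ∈ ({(i, j), (i, 1 - j), (1 - i, j)} : Finset (Fin 2 × Fin 2))
        then Q w else 0) ≤
      min 1 (P i 0 0 + P (1 - i) 0 1 + P (1 - j) 1 0 + P j 1 1) :=
  stmt_3_general P Q hQ hD hM i j
end

section
/- If Q is a probability mass function on W = {0,1}^4 satisfying only the data-matching constraints sum_{w in W_x} Q(w) = P_{y,d|z}, then for any i,j in {0,1}, the probability that (Y0,Y1) lies in {(i,j),(i,1-j),(1-i,j)} is at most min{1, P_{i,0|0} + P_{1-i,0|1} + P_{1-j,1|0} + P_{j,1|1} + min{P_{i,0|1}, P_{j,1|0}}}. -/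
open Finset

set_option linter.unreachableTactic false in
set_option linter.unusedTactic false in
lemma keyB (Q : W → ℝ) (hQpos : ∀ w : W, 0 ≤ Q w) (i j : Fin 2) (w : W) :
    (if (w.1, w.2.1) ∈ ({(i, j), (i, 1 - j), (1 - i, j)} : Finset (Fin 2 × Fin 2))
        then Q w else 0) ≤
    (if dsel 0 w = 0 ∧ ysel 0 w = i then Q w else 0)
    + (if dsel 1 w = 0 ∧ ysel 0 w = 1 - i then Q w else 0)
    + (if dsel 0 w = 1 ∧ ysel 1 w = 1 - j then Q w else 0)
    + (if dsel 1 w = 1 ∧ ysel 1 w = j then Q w else 0)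
    + (if dsel 1 w = 0 ∧ ysel 0 w = i then Q w else 0) := by
  obtain ⟨y0, y1, d0, d1⟩ := w
  fin_cases i <;> fin_cases j <;> fin_cases y0 <;> fin_cases y1 <;>
    fin_cases d0 <;> fin_cases d1 <;>
    simp only [dsel, ysel, Finset.mem_insert, Finset.mem_singleton, Prod.mk.injEq] <;>
    norm_num <;> first | exact hQpos _ | exact (hQpos _).not_lt ‹_›

set_option linter.unreachableTactic false in
set_option linter.unusedTactic false in
lemma keyC (Q : W → ℝ) (hQpos : ∀ w : W, 0 ≤ Q w) (i j : Fin 2) (w : W) :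
    (if (w.1, w.2.1) ∈ ({(i, j), (i, 1 - j), (1 - i, j)} : Finset (Fin 2 × Fin 2))
        then Q w else 0) ≤
    (if dsel 0 w = 0 ∧ ysel 0 w = i then Q w else 0)
    + (if dsel 1 w = 0 ∧ ysel 0 w = 1 - i then Q w else 0)
    + (if dsel 0 w = 1 ∧ ysel 1 w = 1 - j then Q w else 0)
    + (if dsel 1 w = 1 ∧ ysel 1 w = j then Q w else 0)
    + (if dsel 0 w = 1 ∧ ysel 1 w = j then Q w else 0) := by
  obtain ⟨y0, y1, d0, d1⟩ := w
  fin_cases i <;> fin_cases j <;> fin_cases y0 <;> fin_cases y1 <;>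
    fin_cases d0 <;> fin_cases d1 <;>
    simp only [dsel, ysel, Finset.mem_insert, Finset.mem_singleton, Prod.mk.injEq] <;>
    norm_num <;> first | exact hQpos _ | exact (hQpos _).not_lt ‹_›

theorem stmt_4 (P : Fin 2 → Fin 2 → Fin 2 → ℝ) (Q : W → ℝ)
    (hP : PValid P) (hQ : IsPMF Q) (hD : DataMatch Q P) (i j : Fin 2) :
    ∑ w : W, (if (w.1, w.2.1) ∈ ({(i, j), (i, 1 - j), (1 - i, j)} : Finset (Fin 2 × Fin 2))
        then Q w else 0) ≤
      min 1 (P i 0 0 + P (1 - i) 0 1 + P (1 - j) 1 0 + P j 1 1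
        + min (P i 0 1) (P j 1 0)) := by
  obtain ⟨hQpos, hQsum⟩ := hQ
  apply le_min
  · rw [← hQsum]
    apply Finset.sum_le_sum
    intro w _
    split
    · exact le_refl _
    · exact hQpos w
  · rw [← hD i 0 0, ← hD (1 - i) 0 1, ← hD (1 - j) 1 0, ← hD j 1 1,
      ← hD i 0 1, ← hD j 1 0]
    rcases le_total (∑ w : W, (if dsel 1 w = 0 ∧ ysel 0 w = i then Q w else 0))
        (∑ w : W, (if dsel 0 w = 1 ∧ ysel 1 w = j then Q w else 0)) with h | h
    · rw [min_eq_left h]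
      rw [← Finset.sum_add_distrib, ← Finset.sum_add_distrib,
        ← Finset.sum_add_distrib, ← Finset.sum_add_distrib]
      exact Finset.sum_le_sum fun w _ => keyB Q hQpos i j w
    · rw [min_eq_right h]
      rw [← Finset.sum_add_distrib, ← Finset.sum_add_distrib,
        ← Finset.sum_add_distrib, ← Finset.sum_add_distrib]
      exact Finset.sum_le_sum fun w _ => keyC Q hQpos i j w
end

section
/- Suppose P satisfies min{P_{y,1|1} - P_{y,1|0}, P_{y,0|0} - P_{y,0|1}} >= 0 for each y in {0,1}. Then there exists a probability mass function Q on W = {0,1}^4 satisfying both the data-matching constraints sum_{w in W_x} Q(w) = P_{y,d|z} for all x = (y,d,z) and the instrument-monotonicity constraint Q(y0,y1,1,0) = 0 for all y0,y1. -/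
open Finset

theorem stmt_5 (P : Fin 2 → Fin 2 → Fin 2 → ℝ) (hP : PValid P)
    (hK : ∀ y : Fin 2, 0 ≤ min (P y 1 1 - P y 1 0) (P y 0 0 - P y 0 1)) :
    ∃ Q : W → ℝ, IsPMF Q ∧ DataMatch Q P ∧ Mono Q := by
  obtain ⟨hPn, hPs⟩ := hP
  have hs0 := hPs 0
  have hs1 := hPs 1
  simp [Fin.sum_univ_two] at hs0 hs1
  have hK0 := hK 0
  have hK1 := hK 1
  set m0 : ℝ := min (P 0 0 0 - P 0 0 1) (P 0 1 1 - P 0 1 0) with hm0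
  set m1 : ℝ := min (P 1 0 0 - P 1 0 1) (P 1 1 1 - P 1 1 0) with hm1
  have hK0' : 0 ≤ m0 := by rw [hm0, min_comm]; exact hK 0
  have hK1' : 0 ≤ m1 := by rw [hm1, min_comm]; exact hK 1
  have hm0a : m0 ≤ P 0 0 0 - P 0 0 1 := min_le_left _ _
  have hm0b : m0 ≤ P 0 1 1 - P 0 1 0 := min_le_right _ _
  have hm1a : m1 ≤ P 1 0 0 - P 1 0 1 := min_le_left _ _
  have hm1b : m1 ≤ P 1 1 1 - P 1 1 0 := min_le_right _ _
  have hc0 : (m0 = P 0 0 0 - P 0 0 1 ∧ P 0 0 0 - P 0 0 1 ≤ P 0 1 1 - P 0 1 0) ∨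
      (m0 = P 0 1 1 - P 0 1 0 ∧ P 0 1 1 - P 0 1 0 < P 0 0 0 - P 0 0 1) := by
    rw [hm0]; exact min_cases _ _
  have hc1 : (m1 = P 1 0 0 - P 1 0 1 ∧ P 1 0 0 - P 1 0 1 ≤ P 1 1 1 - P 1 1 0) ∨
      (m1 = P 1 1 1 - P 1 1 0 ∧ P 1 1 1 - P 1 1 0 < P 1 0 0 - P 1 0 1) := by
    rw [hm1]; exact min_cases _ _
  refine ⟨fun w =>
    if w.2.2.1 = 0 ∧ w.2.2.2 = 0 then (if w.2.1 = 0 then P w.1 0 1 else 0)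
    else if w.2.2.1 = 1 ∧ w.2.2.2 = 1 then (if w.1 = 0 then P w.2.1 1 0 else 0)
    else if w.2.2.1 = 0 ∧ w.2.2.2 = 1 then
      (if w.1 = 0 then (if w.2.1 = 0 then m0 else (P 0 0 0 - P 0 0 1) - m0)
       else (if w.2.1 = 1 then m1 else (P 1 0 0 - P 1 0 1) - m1))
    else 0, ⟨?_, ?_⟩, ?_, ?_⟩
  · rintro ⟨y0, y1, d0, d1⟩
    fin_cases y0 <;> fin_cases y1 <;> fin_cases d0 <;> fin_cases d1 <;>
      simp_all
  · simp [Fintype.sum_prod_type, Fin.sum_univ_two]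
    linarith
  · intro y d z
    fin_cases y <;> fin_cases d <;> fin_cases z <;>
      simp [dsel, ysel, Fintype.sum_prod_type, Fin.sum_univ_two] <;>
      rcases hc0 with ⟨e0, l0⟩ | ⟨e0, l0⟩ <;> rcases hc1 with ⟨e1, l1⟩ | ⟨e1, l1⟩ <;>
      linarith
  · intro y0 y1
    simp
end

section
/- If Q is a probability mass function on W = {0,1}^4 satisfying the data-matching constraints sum_{w in W_x} Q(w) = P_{y,d|z} for all x, and if P_{0,0|1} + P_{1,0|1} = 0 (i.e. Prob{D=0|Z=1} = 0), then Q automatically satisfies the monotonicity constraint: Q(y0,y1,1,0) = 0 for all y0,y1 in {0,1}. -/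
open Finset

/-! Summing the data-matching constraints over the outcome `y` shows that the mass `Q` puts on
the response types with `dsel z w = d` is `P 0 d z + P 1 d z`. If this vanishes for `d = 0`,
`z = 1`, nonnegativity forces `Q` to vanish on every type with `d1 = 0`, the defiers included. -/

section DataMatch

variable {Q : W → ℝ} {P : Fin 2 → Fin 2 → Fin 2 → ℝ}

theorem DataMatch.sum_treatment (hD : DataMatch Q P) (d z : Fin 2) :
    ∑ w : W, (if dsel z w = d then Q w else 0) = P 0 d z + P 1 d z := by
  rw [← hD 0 d z, ← hD 1 d z, ← Finset.sum_add_distrib]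
  refine Finset.sum_congr rfl fun w _ => ?_
  generalize ysel d w = y
  split_ifs <;> fin_cases y <;> simp_all

theorem DataMatch.eq_zero_of_treatment_prob_eq_zero (hD : DataMatch Q P)
    (hQ : ∀ w, 0 ≤ Q w) {d z : Fin 2} (h : P 0 d z + P 1 d z = 0) {w : W}
    (hw : dsel z w = d) : Q w = 0 := by
  have hnonneg : ∀ v ∈ (univ : Finset W), 0 ≤ if dsel z v = d then Q v else 0 :=
    fun v _ => by split_ifs <;> simp [hQ v]
  rw [← hD.sum_treatment d z, Finset.sum_eq_zero_iff_of_nonneg hnonneg] at h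
  simpa [hw] using h w (mem_univ w)

end DataMatch

theorem stmt_8_general (P : Fin 2 → Fin 2 → Fin 2 → ℝ) (Q : W → ℝ)
    (hQ : IsPMF Q) (hD : DataMatch Q P)
    (h0 : P 0 0 1 + P 1 0 1 = 0) : Mono Q :=
  fun _ _ => hD.eq_zero_of_treatment_prob_eq_zero hQ.1 h0 rfl

theorem stmt_8 (P : Fin 2 → Fin 2 → Fin 2 → ℝ) (Q : W → ℝ)
    (hP : PValid P) (hQ : IsPMF Q) (hD : DataMatch Q P)
    (h0 : P 0 0 1 + P 1 0 1 = 0) : Mono Q :=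
  stmt_8_general P Q hQ hD h0
end

section
/- Suppose P satisfies the Kitagawa conditions min{P_{y,1|1} - P_{y,1|0}, P_{y,0|0} - P_{y,0|1}} >= 0 for each y in {0,1}. Then for any i,j in {0,1} and any t in the closed interval [1 - min{1, P_{1-i,0|0} + P_{i,0|1} + P_{j,1|0} + P_{1-j,1|1}}, min{P_{i,0|0} + P_{j,1|0}, P_{i,0|1} + P_{j,1|1}}], there exists a probability mass function Q on W = {0,1}^4 satisfying the data-matching constraints and the monotonicity constraint Q(y0,y1,1,0)=0 such that the probability under Q that (Y0,Y1)=(i,j) equals t. -/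
open Finset

/-- assemble Q from never-taker, complier, always-taker matrices -/
def Qmk (n c a : Fin 2 → Fin 2 → ℝ) : W → ℝ := fun w =>
  if w.2.2.1 = 0 ∧ w.2.2.2 = 0 then n w.1 w.2.1
  else if w.2.2.1 = 0 ∧ w.2.2.2 = 1 then c w.1 w.2.1
  else if w.2.2.1 = 1 ∧ w.2.2.2 = 1 then a w.1 w.2.1
  else 0

lemma fin2_resolve (y a b : Fin 2) (h1 : b ≠ a) (h2 : y ≠ a) : y = b := by
  revert h1 h2; revert y a b; decide

lemma fin2_pair (a b : Fin 2) (h : b ≠ a) : (a = 0 ∧ b = 1) ∨ (a = 1 ∧ b = 0) := by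
  revert h; revert a b; decide

lemma mono_Qmk (n c a : Fin 2 → Fin 2 → ℝ) : Mono (Qmk n c a) := by
  intro y0 y1; simp [Qmk, Mono]

lemma nonneg_Qmk (n c a : Fin 2 → Fin 2 → ℝ) (hn : ∀ x y, 0 ≤ n x y)
    (hc : ∀ x y, 0 ≤ c x y) (ha : ∀ x y, 0 ≤ a x y) : ∀ w : W, 0 ≤ Qmk n c a w := by
  intro w; simp only [Qmk]
  split_ifs <;> first | exact hn _ _ | exact hc _ _ | exact ha _ _ | exact le_rfl

lemma sum_Qmk (n c a : Fin 2 → Fin 2 → ℝ) :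
    ∑ w : W, Qmk n c a w =
      (n 0 0 + n 0 1 + n 1 0 + n 1 1) + (c 0 0 + c 0 1 + c 1 0 + c 1 1)
        + (a 0 0 + a 0 1 + a 1 0 + a 1 1) := by
  simp [Qmk, Fintype.sum_prod_type, Fin.sum_univ_two]; ring

lemma datamatch_Qmk (P : Fin 2 → Fin 2 → Fin 2 → ℝ) (n c a : Fin 2 → Fin 2 → ℝ)
    (hnrow : ∀ y, n y 0 + n y 1 = P y 0 1)
    (hcrow : ∀ y, c y 0 + c y 1 = P y 0 0 - P y 0 1)
    (hccol : ∀ y, c 0 y + c 1 y = P y 1 1 - P y 1 0)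
    (hacol : ∀ y, a 0 y + a 1 y = P y 1 0) :
    DataMatch (Qmk n c a) P := by
  intro y d z
  fin_cases y <;> fin_cases d <;> fin_cases z <;>
    simp [Qmk, dsel, ysel, Fintype.sum_prod_type, Fin.sum_univ_two] <;>
    linarith [hnrow 0, hnrow 1, hcrow 0, hcrow 1, hccol 0, hccol 1, hacol 0, hacol 1]

lemma obj_Qmk (n c a : Fin 2 → Fin 2 → ℝ) (i j : Fin 2) :
    ∑ w : W, (if w.1 = i ∧ w.2.1 = j then Qmk n c a w else 0)
      = n i j + c i j + a i j := by
  fin_cases i <;> fin_cases j <;>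
    simp [Qmk, Fintype.sum_prod_type, Fin.sum_univ_two] <;> ring

lemma build (P : Fin 2 → Fin 2 → Fin 2 → ℝ) (i j i' j' : Fin 2)
    (hi : i' ≠ i) (hj : j' ≠ j)
    (hnn : ∀ y d z, 0 ≤ P y d z)
    (h00 : P 0 0 0 + P 0 1 0 + P 1 0 0 + P 1 1 0 = 1)
    (h11 : P 0 0 1 + P 0 1 1 + P 1 0 1 + P 1 1 1 = 1)
    (hKi : P i 0 1 ≤ P i 0 0) (hKi' : P i' 0 1 ≤ P i' 0 0)
    (hKj : P j 1 0 ≤ P j 1 1) (hKj' : P j' 1 0 ≤ P j' 1 1)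
    (t : ℝ)
    (hL : 1 - (P i' 0 0 + P i 0 1 + P j 1 0 + P j' 1 1) ≤ t) (hL0 : 0 ≤ t)
    (hU1 : t ≤ P i 0 0 + P j 1 0) (hU2 : t ≤ P i 0 1 + P j 1 1) :
    ∃ Q : W → ℝ, IsPMF Q ∧ DataMatch Q P ∧ Mono Q ∧
      ∑ w : W, (if w.1 = i ∧ w.2.1 = j then Q w else 0) = t := by
  obtain ⟨qi, hqidef⟩ : ∃ x : ℝ, x = P i 0 0 - P i 0 1 := ⟨_, rfl⟩
  obtain ⟨q', hq'def⟩ : ∃ x : ℝ, x = P i' 0 0 - P i' 0 1 := ⟨_, rfl⟩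
  obtain ⟨rj, hrjdef⟩ : ∃ x : ℝ, x = P j 1 1 - P j 1 0 := ⟨_, rfl⟩
  obtain ⟨r', hr'def⟩ : ∃ x : ℝ, x = P j' 1 1 - P j' 1 0 := ⟨_, rfl⟩
  obtain ⟨m, hmdef⟩ : ∃ x : ℝ, x = qi + q' := ⟨_, rfl⟩
  have hqi : 0 ≤ qi := by rw [hqidef]; linarith
  have hq' : 0 ≤ q' := by rw [hq'def]; linarith
  have hrj : 0 ≤ rj := by rw [hrjdef]; linarith
  have hr' : 0 ≤ r' := by rw [hr'def]; linarith
  have hm : m = rj + r' := by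
    rcases fin2_pair i i' hi with ⟨h1, h2⟩ | ⟨h1, h2⟩ <;>
      rcases fin2_pair j j' hj with ⟨h3, h4⟩ | ⟨h3, h4⟩ <;>
      rw [hmdef, hqidef, hq'def, hrjdef, hr'def, h1, h2, h3, h4] <;> linarith
  obtain ⟨s, hsdef⟩ : ∃ x : ℝ, x = min t (min qi rj) := ⟨_, rfl⟩
  have hs0 : 0 ≤ s := hsdef ▸ le_min hL0 (le_min hqi hrj)
  have hst : s ≤ t := hsdef ▸ min_le_left _ _
  have hsqi : s ≤ qi := hsdef ▸ le_trans (min_le_right _ _) (min_le_left _ _)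
  have hsrj : s ≤ rj := hsdef ▸ le_trans (min_le_right _ _) (min_le_right _ _)
  have htlow : qi + rj - m ≤ t := by
    have e : qi + rj - m = rj - q' := by rw [hmdef]; ring
    rw [e, hrjdef, hq'def]
    rcases fin2_pair i i' hi with ⟨h1, h2⟩ | ⟨h1, h2⟩ <;>
      rcases fin2_pair j j' hj with ⟨h3, h4⟩ | ⟨h3, h4⟩ <;>
      rw [h2, h3] <;> rw [h2, h3, h4] at hL <;> rw [h1] at hL <;> linarith
  have hslow : qi + rj - m ≤ s := by
    rw [hsdef]
    refine le_min htlow (le_min ?_ ?_) <;> linarith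
  obtain ⟨u, hudef⟩ : ∃ x : ℝ, x = min (t - s) (P i 0 1) := ⟨_, rfl⟩
  have hu0 : 0 ≤ u := hudef ▸ le_min (by linarith) (hnn i 0 1)
  have huts : u ≤ t - s := hudef ▸ min_le_left _ _
  have huP : u ≤ P i 0 1 := hudef ▸ min_le_right _ _
  obtain ⟨v, hvdef⟩ : ∃ x : ℝ, x = t - s - u := ⟨_, rfl⟩
  have hv0 : 0 ≤ v := by rw [hvdef]; linarith
  have hvP : v ≤ P j 1 0 := by
    rcases min_cases t (min qi rj) with ⟨e1, _⟩ | ⟨e1, _⟩ <;>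
      rcases min_cases qi rj with ⟨e0, _⟩ | ⟨e0, _⟩ <;>
      rcases min_cases (t - s) (P i 0 1) with ⟨e2, _⟩ | ⟨e2, _⟩ <;>
      rw [hvdef] <;>
      linarith [hnn j 1 0, hnn i 0 1]
  obtain ⟨n, hndef⟩ : ∃ f : Fin 2 → Fin 2 → ℝ, f = fun a b =>
      if a = i then (if b = j then u else P i 0 1 - u)
      else (if b = j then 0 else P i' 0 1) := ⟨_, rfl⟩
  obtain ⟨c, hcdef⟩ : ∃ f : Fin 2 → Fin 2 → ℝ, f = fun a b =>
      if a = i then (if b = j then s else qi - s)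
      else (if b = j then rj - s else m - qi - rj + s) := ⟨_, rfl⟩
  obtain ⟨aa, hadef⟩ : ∃ f : Fin 2 → Fin 2 → ℝ, f = fun a b =>
      if b = j then (if a = i then v else P j 1 0 - v)
      else (if a = i then 0 else P j' 1 0) := ⟨_, rfl⟩
  have hn : ∀ x y, 0 ≤ n x y := by
    intro x y; rw [hndef]; dsimp only
    split_ifs <;> [exact hu0; linarith; exact le_rfl; exact hnn i' 0 1]
  have hc : ∀ x y, 0 ≤ c x y := by
    intro x y; rw [hcdef]; dsimp only
    split_ifs <;> [exact hs0; linarith; linarith; linarith]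
  have ha : ∀ x y, 0 ≤ aa x y := by
    intro x y; rw [hadef]; dsimp only
    split_ifs <;> [exact hv0; linarith; exact le_rfl; exact hnn j' 1 0]
  rcases fin2_pair i i' hi with ⟨rfl, rfl⟩ | ⟨rfl, rfl⟩ <;>
    rcases fin2_pair j j' hj with ⟨rfl, rfl⟩ | ⟨rfl, rfl⟩ <;>
  · have hnrow : ∀ y, n y 0 + n y 1 = P y 0 1 := by
      intro y; fin_cases y <;> rw [hndef] <;> norm_num <;>
        first | linarith [hqidef, hq'def] | skip
    have hcrow : ∀ y, c y 0 + c y 1 = P y 0 0 - P y 0 1 := by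
      intro y; fin_cases y <;> rw [hcdef] <;> norm_num <;>
        first | linarith [hqidef, hq'def, hrjdef, hr'def, hmdef, hm] | skip
    have hccol : ∀ y, c 0 y + c 1 y = P y 1 1 - P y 1 0 := by
      intro y; fin_cases y <;> rw [hcdef] <;> norm_num <;>
        first | linarith [hqidef, hq'def, hrjdef, hr'def, hmdef, hm] | skip
    have hacol : ∀ y, aa 0 y + aa 1 y = P y 1 0 := by
      intro y; fin_cases y <;> rw [hadef] <;> norm_num <;>
        first | linarith [hrjdef, hr'def] | skip
    refine ⟨Qmk n c aa, ⟨nonneg_Qmk n c aa hn hc ha, ?_⟩,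
      datamatch_Qmk P n c aa hnrow hcrow hccol hacol, mono_Qmk n c aa, ?_⟩
    · rw [sum_Qmk]
      linarith [hnrow 0, hnrow 1, hcrow 0, hcrow 1, hacol 0, hacol 1, h00]
    · rw [obj_Qmk, hndef, hcdef, hadef]
      norm_num
      linarith [hvdef]

theorem stmt_15 (P : Fin 2 → Fin 2 → Fin 2 → ℝ) (hP : PValid P)
    (hK : ∀ y : Fin 2, 0 ≤ min (P y 1 1 - P y 1 0) (P y 0 0 - P y 0 1))
    (i j : Fin 2) (t : ℝ)
    (ht : t ∈ Set.Icc (1 - min 1 (P (1 - i) 0 0 + P i 0 1 + P j 1 0 + P (1 - j) 1 1))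
        (min (P i 0 0 + P j 1 0) (P i 0 1 + P j 1 1))) :
    ∃ Q : W → ℝ, IsPMF Q ∧ DataMatch Q P ∧ Mono Q ∧
      ∑ w : W, (if w.1 = i ∧ w.2.1 = j then Q w else 0) = t := by
  obtain ⟨hnn, hsum⟩ := hP
  have h00 := hsum 0
  have h11 := hsum 1
  simp only [Fin.sum_univ_two] at h00 h11
  obtain ⟨htL, htU⟩ := ht
  have hi : (1 : Fin 2) - i ≠ i := by fin_cases i <;> decide
  have hj : (1 : Fin 2) - j ≠ j := by fin_cases j <;> decide
  have hKi : P i 0 1 ≤ P i 0 0 := by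
    have := le_trans (hK i) (min_le_right _ _); linarith
  have hKi' : P (1 - i) 0 1 ≤ P (1 - i) 0 0 := by
    have := le_trans (hK (1 - i)) (min_le_right _ _); linarith
  have hKj : P j 1 0 ≤ P j 1 1 := by
    have := le_trans (hK j) (min_le_left _ _); linarith
  have hKj' : P (1 - j) 1 0 ≤ P (1 - j) 1 1 := by
    have := le_trans (hK (1 - j)) (min_le_left _ _); linarith
  have hL : 1 - (P (1 - i) 0 0 + P i 0 1 + P j 1 0 + P (1 - j) 1 1) ≤ t := by
    have := min_le_right (1 : ℝ) (P (1 - i) 0 0 + P i 0 1 + P j 1 0 + P (1 - j) 1 1)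
    linarith
  have hL0 : (0 : ℝ) ≤ t := by
    have := min_le_left (1 : ℝ) (P (1 - i) 0 0 + P i 0 1 + P j 1 0 + P (1 - j) 1 1)
    linarith
  have hU1 : t ≤ P i 0 0 + P j 1 0 := le_trans htU (min_le_left _ _)
  have hU2 : t ≤ P i 0 1 + P j 1 1 := le_trans htU (min_le_right _ _)
  exact build P i j (1 - i) (1 - j) hi hj hnn (by linarith) (by linarith)
    hKi hKi' hKj hKj' t hL hL0 hU1 hU2
end

section
/- Suppose Prob{D=1|Z=0} = P_{0,1|0} + P_{1,1|0} = 0 or Prob{D=0|Z=1} = P_{0,0|1} + P_{1,0|1} = 0. Then a probability mass function Q on W = {0,1}^4 satisfying the data-matching constraints exists if and only if one satisfying both the data-matching constraints and the monotonicity constraint Q(y0,y1,1,0)=0 exists; moreover the two constraint sets of pmfs are identical. -/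
open Finset

lemma mono_aux (P : Fin 2 → Fin 2 → Fin 2 → ℝ)
    (h : P 0 1 0 + P 1 1 0 = 0 ∨ P 0 0 1 + P 1 0 1 = 0)
    (Q : W → ℝ) (hpmf : IsPMF Q) (hdm : DataMatch Q P) : Mono Q := by
  obtain ⟨hnn, _⟩ := hpmf
  intro y0 y1
  rcases h with h | h
  · have key : ∑ w : W, (if w.2.2.1 = 1 then Q w else 0) = 0 := by
      have h1 := hdm 0 1 0
      have h2 := hdm 1 1 0
      have heq : ∑ w : W, (if w.2.2.1 = 1 then Q w else 0)
          = ∑ w : W, ((if dsel 0 w = 1 ∧ ysel 1 w = 0 then Q w else 0)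
            + (if dsel 0 w = 1 ∧ ysel 1 w = 1 then Q w else 0)) := by
        apply Finset.sum_congr rfl
        intro w _
        have hy : w.2.1 = 0 ∨ w.2.1 = 1 := by omega
        have hd : w.2.2.1 = 0 ∨ w.2.2.1 = 1 := by omega
        simp only [dsel, ysel]
        rcases hy with hy | hy <;> rcases hd with hd | hd <;> simp [hy, hd]
      rw [heq, Finset.sum_add_distrib, h1, h2, h]
    have hzero := (Finset.sum_eq_zero_iff_of_nonneg (by
      intro w _
      split <;> simp [hnn w])).mp key (y0, y1, 1, 0) (Finset.mem_univ _)
    simpa using hzero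
  · have key : ∑ w : W, (if w.2.2.2 = 0 then Q w else 0) = 0 := by
      have h1 := hdm 0 0 1
      have h2 := hdm 1 0 1
      have heq : ∑ w : W, (if w.2.2.2 = 0 then Q w else 0)
          = ∑ w : W, ((if dsel 1 w = 0 ∧ ysel 0 w = 0 then Q w else 0)
            + (if dsel 1 w = 0 ∧ ysel 0 w = 1 then Q w else 0)) := by
        apply Finset.sum_congr rfl
        intro w _
        have hy : w.1 = 0 ∨ w.1 = 1 := by omega
        have hd : w.2.2.2 = 0 ∨ w.2.2.2 = 1 := by omega
        simp only [dsel, ysel]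
        rcases hy with hy | hy <;> rcases hd with hd | hd <;> simp [hy, hd]
      rw [heq, Finset.sum_add_distrib, h1, h2, h]
    have hzero := (Finset.sum_eq_zero_iff_of_nonneg (by
      intro w _
      split <;> simp [hnn w])).mp key (y0, y1, 1, 0) (Finset.mem_univ _)
    simpa using hzero

theorem stmt_18 (P : Fin 2 → Fin 2 → Fin 2 → ℝ) (hP : PValid P)
    (h : P 0 1 0 + P 1 1 0 = 0 ∨ P 0 0 1 + P 1 0 1 = 0) :
    {Q : W → ℝ | IsPMF Q ∧ DataMatch Q P} =
      {Q : W → ℝ | IsPMF Q ∧ DataMatch Q P ∧ Mono Q} ∧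
    ((∃ Q : W → ℝ, IsPMF Q ∧ DataMatch Q P) ↔
      (∃ Q : W → ℝ, IsPMF Q ∧ DataMatch Q P ∧ Mono Q)) := by
  have key : {Q : W → ℝ | IsPMF Q ∧ DataMatch Q P} =
      {Q : W → ℝ | IsPMF Q ∧ DataMatch Q P ∧ Mono Q} := by
    ext Q
    simp only [Set.mem_setOf_eq]
    constructor
    · rintro ⟨h1, h2⟩; exact ⟨h1, h2, mono_aux P h Q h1 h2⟩
    · rintro ⟨h1, h2, _⟩; exact ⟨h1, h2⟩
  refine ⟨key, ?_⟩
  constructor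
  · rintro ⟨Q, h1, h2⟩; exact ⟨Q, h1, h2, mono_aux P h Q h1 h2⟩
  · rintro ⟨Q, h1, h2, _⟩; exact ⟨Q, h1, h2⟩
end
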